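/- Let γ be a closed convex curve in ℝ², invariant under q ↦ -q, meeting every line in at most two points. Then for every q₃ ∈ γ there exists a unique unordered pair {q₁, q₂} of points of γ with q₁ ≠ q₂ (as a pair, determined uniquely) satisfying q₁ + q₂ + q₃ = 0. -/

import Mathlib

/-!
The hypothesis on lines makes `K` strictly convex. Put `v = q₃`. Since `γ = -γ`, the pairs
`{q₁, q₂}` correspond to the points `a = q₁` with `a ∈ γ` and `a + v ∈ γ`, the points `a` and
`-(a + v)` giving the same pair. Such an `a` exists by the intermediate value theorem for
`a ↦ gauge K (a + v)` on the connected curve `γ`, which is `0` at `a = -v` and `2` at `a = v`.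
By strict convexity, two translates of the chord `[a, a + v]` never lie on one line; if three
lay on three parallel lines, the convex combination of the outer two would be a segment of `K`
of the same length on the middle line, hence the middle chord itself, whose endpoints would
then be interior points. So there are at most two such points `a`.
-/

open Filter Topology Set

section StrictConvexity

variable {E : Type*} [AddCommGroup E] [Module ℝ E]

theorem eq_or_eq_or_eq_of_collinear {s : Set E}
    (hline : ∀ a v : E, v ≠ 0 →
      ∀ x ∈ s ∩ {q | ∃ t : ℝ, q = a + t • v}, ∀ y ∈ s ∩ {q | ∃ t : ℝ, q = a + t • v},
      ∀ z ∈ s ∩ {q | ∃ t : ℝ, q = a + t • v}, x = y ∨ x = z ∨ y = z)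
    {x y z : E} (hx : x ∈ s) (hy : y ∈ s) (hz : z ∈ s) (hxyz : Collinear ℝ {x, y, z}) :
    x = y ∨ x = z ∨ y = z := by
  obtain ⟨v, hv⟩ := (collinear_iff_of_mem (mem_insert x _)).1 hxyz
  have hline_v (p : E) (hp : p ∈ ({x, y, z} : Set E)) : ∃ t : ℝ, p = x + t • v := by
    obtain ⟨t, rfl⟩ := hv p hp
    exact ⟨t, add_comm _ _⟩
  rcases eq_or_ne v 0 with rfl | hv0
  · obtain ⟨t, hyx⟩ := hline_v y (by simp)
    simp [hyx]
  · exact hline x v hv0 x ⟨hx, hline_v x (by simp)⟩ y ⟨hy, hline_v y (by simp)⟩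
      z ⟨hz, hline_v z (by simp)⟩

variable [TopologicalSpace E] {K : Set E}

theorem Convex.strictConvex_of_collinear [IsTopologicalAddGroup E] [ContinuousConstSMul ℝ E]
    (hK : Convex ℝ K)
    (h : ∀ x ∈ frontier K, ∀ y ∈ frontier K, ∀ z ∈ frontier K,
      Collinear ℝ {x, y, z} → x = y ∨ x = z ∨ y = z) :
    StrictConvex ℝ K := by
  intro x hx y hy hxy a b ha hb hab
  have hz : a • x + b • y ∈ openSegment ℝ x y := ⟨a, b, ha, hb, hab, rfl⟩
  by_contra hzi
  have hzf : a • x + b • y ∈ frontier K :=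
    ⟨subset_closure (hK hx hy ha.le hb.le hab), hzi⟩
  have hxf : x ∈ frontier K := ⟨subset_closure hx, fun hxi =>
    hzi (hK.openSegment_interior_closure_subset_interior hxi (subset_closure hy) hz)⟩
  have hyf : y ∈ frontier K := ⟨subset_closure hy, fun hyi =>
    hzi (hK.openSegment_closure_interior_subset_interior (subset_closure hx) hyi hz)⟩
  have hcol : Collinear ℝ {x, y, a • x + b • y} := by
    rw [pair_comm]
    exact (mem_segment_iff_wbtw.1 (openSegment_subset_segment _ _ _ hz)).collinear
  rcases h x hxf y hyf _ hzf hcol with h | h | h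
  · exact hxy h
  · exact (left_mem_openSegment_iff.not.2 hxy) (by rwa [← h] at hz)
  · exact (right_mem_openSegment_iff.not.2 hxy) (by rwa [← h] at hz)

theorem StrictConvex.add_smul_mem_interior (hK : StrictConvex ℝ K) {a v : E} (hv : v ≠ 0)
    {s t r : ℝ} (hs : a + s • v ∈ K) (ht : a + t • v ∈ K) (hr : r ∈ Ioo s t) :
    a + r • v ∈ interior K := by
  have hst : s < t := hr.1.trans hr.2
  let ℓ : ℝ →ᵃ[ℝ] E := AffineMap.lineMap a (a + v)
  have hℓ (x : ℝ) : ℓ x = a + x • v := by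
    simp [ℓ, AffineMap.lineMap_apply_module', add_comm]
  have hne : a + s • v ≠ a + t • v := by
    simpa [(smul_left_injective ℝ hv).eq_iff] using hst.ne
  refine hK.openSegment_subset hs ht hne ?_
  rw [← hℓ, ← hℓ, ← image_openSegment, openSegment_eq_Ioo hst]
  exact ⟨r, hr, hℓ r⟩

theorem StrictConvex.mem_Icc_of_add_smul_mem (hK : StrictConvex ℝ K) (hKc : IsClosed K)
    {a v : E} (hv : v ≠ 0) (ha : a ∈ frontier K) (hav : a + v ∈ frontier K) {t : ℝ}
    (ht : a + t • v ∈ K) : t ∈ Icc 0 1 := by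
  have ha' : a + (0 : ℝ) • v ∈ K := by simpa using hKc.frontier_subset ha
  have hav' : a + (1 : ℝ) • v ∈ K := by simpa using hKc.frontier_subset hav
  by_contra hmem
  rcases not_and_or.1 hmem with h0 | h1
  · exact ha.2 (by simpa using hK.add_smul_mem_interior hv ht hav' ⟨not_le.1 h0, one_pos⟩)
  · exact hav.2 (by simpa using hK.add_smul_mem_interior hv ha' ht ⟨one_pos, not_le.1 h1⟩)

theorem StrictConvex.eq_zero_of_add_smul_mem (hK : StrictConvex ℝ K) (hKc : IsClosed K)
    {a v : E} (hv : v ≠ 0) (ha : a ∈ frontier K) (hav : a + v ∈ frontier K) {t : ℝ}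
    (ht : a + t • v ∈ K) (htv : a + t • v + v ∈ K) : t = 0 := by
  have h₀ := hK.mem_Icc_of_add_smul_mem hKc hv ha hav ht
  have h₁ := hK.mem_Icc_of_add_smul_mem hKc hv ha hav (t := t + 1)
    (by rwa [add_smul, one_smul, ← add_assoc])
  linarith [h₀.1, h₁.2]

def chordBases (K : Set E) (v : E) : Set E := {a | a ∈ frontier K ∧ a + v ∈ frontier K}

theorem StrictConvex.eq_or_eq_of_map_mem_segment (hK : StrictConvex ℝ K) (hKc : IsClosed K)
    {v : E} (hv : v ≠ 0) (f : E →ₗ[ℝ] ℝ) (hf : ∀ u, f u = 0 → ∃ t : ℝ, u = t • v)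
    {x y z : E} (hx : x ∈ chordBases K v) (hy : y ∈ chordBases K v) (hz : z ∈ chordBases K v)
    (hfy : f y ∈ segment ℝ (f x) (f z)) : y = x ∨ y = z := by
  obtain ⟨w, hw, hfw⟩ : f y ∈ f '' segment ℝ x z := by
    have himage := image_segment ℝ f.toAffineMap x z
    rw [LinearMap.coe_toAffineMap] at himage
    rwa [himage]
  obtain ⟨t, ht⟩ := hf (w - y) (by simp [hfw])
  have hwy : w = y + t • v := by rw [← ht]; abel
  have hwK : w ∈ K :=
    hK.convex.segment_subset (hKc.frontier_subset hx.1) (hKc.frontier_subset hz.1) hw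
  have hwvK : w + v ∈ K := by
    refine hK.convex.segment_subset (hKc.frontier_subset hx.2) (hKc.frontier_subset hz.2) ?_
    simpa [add_comm _ v] using (mem_segment_translate ℝ v).2 hw
  obtain rfl : t = 0 := hK.eq_zero_of_add_smul_mem hKc hv hy.1 hy.2 (hwy ▸ hwK) (hwy ▸ hwvK)
  rw [zero_smul, add_zero] at hwy
  subst hwy
  by_contra! hne
  have hxz : x ≠ z := by
    rintro rfl
    exact hne.1 (by simpa using hw)
  exact hy.1.2 (hK.openSegment_subset (hKc.frontier_subset hx.1) (hKc.frontier_subset hz.1) hxz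
    (mem_openSegment_of_ne_left_right hne.1.symm hne.2.symm hw))

end StrictConvexity

theorem mem_segment_or_mem_segment_or_mem_segment (a b c : ℝ) :
    b ∈ segment ℝ a c ∨ a ∈ segment ℝ b c ∨ c ∈ segment ℝ a b := by
  simp only [segment_eq_uIcc, mem_uIcc]
  rcases le_total a b with hab | hab <;> rcases le_total b c with hbc | hbc <;>
    rcases le_total a c with hac | hac <;> tauto

def crossWith (v : ℝ × ℝ) : (ℝ × ℝ) →ₗ[ℝ] ℝ :=
  v.2 • LinearMap.fst ℝ ℝ ℝ - v.1 • LinearMap.snd ℝ ℝ ℝ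

theorem crossWith_apply (v u : ℝ × ℝ) : crossWith v u = v.2 * u.1 - v.1 * u.2 := rfl

theorem exists_eq_smul_of_crossWith_eq_zero {v u : ℝ × ℝ} (hv : v ≠ 0)
    (h : crossWith v u = 0) : ∃ t : ℝ, u = t • v := by
  rw [crossWith_apply] at h
  obtain ⟨v₁, v₂⟩ := v
  obtain ⟨u₁, u₂⟩ := u
  dsimp only at h
  by_cases h₁ : v₁ = 0
  · have h₂ : v₂ ≠ 0 := fun h₂ => hv (by simp [h₁, h₂])
    refine ⟨u₂ / v₂, Prod.ext ?_ ?_⟩ <;> simp only [Prod.smul_mk, smul_eq_mul]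
    · field_simp
      simp_all
    · field_simp
  · refine ⟨u₁ / v₁, Prod.ext ?_ ?_⟩ <;> simp only [Prod.smul_mk, smul_eq_mul]
    · field_simp
    · field_simp
      linarith

theorem StrictConvex.eq_or_eq_or_eq_of_mem_chordBases {K : Set (ℝ × ℝ)} (hK : StrictConvex ℝ K)
    (hKc : IsClosed K) {v : ℝ × ℝ} (hv : v ≠ 0) {x y z : ℝ × ℝ} (hx : x ∈ chordBases K v)
    (hy : y ∈ chordBases K v) (hz : z ∈ chordBases K v) : x = y ∨ x = z ∨ y = z := by
  have hmid {x y z : ℝ × ℝ} (hx : x ∈ chordBases K v) (hy : y ∈ chordBases K v)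
      (hz : z ∈ chordBases K v) (h : crossWith v y ∈ segment ℝ (crossWith v x) (crossWith v z)) :
      y = x ∨ y = z :=
    hK.eq_or_eq_of_map_mem_segment hKc hv (crossWith v)
      (fun _ => exists_eq_smul_of_crossWith_eq_zero hv) hx hy hz h
  rcases mem_segment_or_mem_segment_or_mem_segment (crossWith v x) (crossWith v y)
    (crossWith v z) with h | h | h
  · rcases hmid hx hy hz h with rfl | rfl <;> simp
  · rcases hmid hy hx hz h with rfl | rfl <;> simp
  · rcases hmid hx hz hy h with rfl | rfl <;> simp

section Symmetric

variable {E : Type*} [AddCommGroup E] [TopologicalSpace E] [IsTopologicalAddGroup E]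
  {K : Set E}

theorem neg_mem_frontier_of_neg_eq (hsymm : -K = K) {a : E} (ha : a ∈ frontier K) :
    -a ∈ frontier K := by
  change a ∈ Homeomorph.neg E ⁻¹' frontier K
  rw [Homeomorph.preimage_frontier]
  change a ∈ frontier (-K)
  rwa [hsymm]

theorem neg_mem_interior_of_neg_eq (hsymm : -K = K) {a : E} (ha : a ∈ interior K) :
    -a ∈ interior K := by
  change a ∈ Homeomorph.neg E ⁻¹' interior K
  rw [Homeomorph.preimage_interior]
  change a ∈ interior (-K)
  rwa [hsymm]

theorem Convex.mem_nhds_zero_of_neg_eq [Module ℝ E] [ContinuousConstSMul ℝ E]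
    (hK : Convex ℝ K) (hsymm : -K = K) (hint : (interior K).Nonempty) : K ∈ 𝓝 0 := by
  obtain ⟨a, ha⟩ := hint
  have hmid := hK.interior ha (neg_mem_interior_of_neg_eq hsymm ha) (by norm_num : (0 : ℝ) ≤ 1 / 2)
    (by norm_num : (0 : ℝ) ≤ 1 / 2) (by norm_num)
  rw [smul_neg, add_neg_cancel] at hmid
  exact mem_interior_iff_mem_nhds.1 hmid

end Symmetric

section Gauge

variable {E : Type*} [AddCommGroup E] [Module ℝ E] [TopologicalSpace E]
  [IsTopologicalAddGroup E] [ContinuousSMul ℝ E] {K : Set E}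

theorem Convex.smul_notMem_frontier (hK : Convex ℝ K) (h0 : K ∈ 𝓝 0) {a : E}
    (ha : a ∈ frontier K) {r : ℝ} (hr0 : 0 ≤ r) (hr1 : r ≠ 1) : r • a ∉ frontier K := by
  rwa [← gauge_eq_one_iff_mem_frontier hK h0, gauge_smul_of_nonneg hr0,
    (gauge_eq_one_iff_mem_frontier hK h0).2 ha, smul_eq_mul, mul_one]

theorem Convex.exists_mem_frontier_add_mem_frontier (hK : Convex ℝ K) (h0 : K ∈ 𝓝 0)
    (hconn : IsPreconnected (frontier K)) {v : E} (hv : v ∈ frontier K)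
    (hnv : -v ∈ frontier K) : ∃ a ∈ frontier K, a + v ∈ frontier K := by
  have hgauge (x : E) := gauge_eq_one_iff_mem_frontier hK h0 (x := x)
  have hone : (1 : ℝ) ∈ Icc (gauge K (-v + v)) (gauge K (v + v)) := by
    rw [neg_add_cancel, gauge_zero, ← two_smul ℝ v, gauge_smul_of_nonneg zero_le_two,
      (hgauge v).2 hv]
    norm_num
  obtain ⟨a, ha, hav⟩ := hconn.intermediate_value hnv hv
    ((continuous_gauge hK h0).comp (continuous_add_const v)).continuousOn hone
  exact ⟨a, ha, (hgauge _).1 hav⟩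

end Gauge

theorem Convex.isConnected_frontier {E : Type*} [NormedAddCommGroup E] [NormedSpace ℝ E]
    (hE : 1 < Module.rank ℝ E) {K : Set E} (hK : Convex ℝ K) (hint : (interior K).Nonempty)
    (hb : Bornology.IsBounded K) : IsConnected (frontier K) := by
  obtain ⟨h, -, -, hfr⟩ := exists_homeomorph_image_interior_closure_frontier_eq_unitBall hK hint hb
  rw [← h.preimage_image (frontier K), hfr, h.isConnected_preimage]
  exact isConnected_sphere hE 0 zero_le_one

/-- Uniqueness of the pair: for a closed convex curve `γ` (boundary of a centrally
symmetric compact convex body) meeting every line in at most two points, for every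
`q₃ ∈ γ` there is a unique unordered pair `{q₁, q₂} ⊆ γ`, `q₁ ≠ q₂`, with
`q₁ + q₂ + q₃ = 0`. -/
theorem stmt6 (K : Set (ℝ × ℝ)) (hK : IsCompact K) (hKconv : Convex ℝ K)
    (hKint : (interior K).Nonempty) (hKsym : ∀ q, q ∈ K ↔ -q ∈ K)
    (γ : Set (ℝ × ℝ)) (hγ : γ = frontier K)
    (hline : ∀ a v : ℝ × ℝ, v ≠ 0 →
      ∀ x ∈ γ ∩ {q | ∃ t : ℝ, q = a + t • v}, ∀ y ∈ γ ∩ {q | ∃ t : ℝ, q = a + t • v},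
      ∀ z ∈ γ ∩ {q | ∃ t : ℝ, q = a + t • v}, x = y ∨ x = z ∨ y = z) :
    ∀ q₃ ∈ γ, ∃! P : Set (ℝ × ℝ),
      ∃ q₁ q₂, q₁ ≠ q₂ ∧ q₁ ∈ γ ∧ q₂ ∈ γ ∧ q₁ + q₂ + q₃ = 0 ∧ P = {q₁, q₂} := by
  subst hγ
  have hsymm : -K = K := ext fun q => (hKsym q).symm
  have h0 : K ∈ 𝓝 0 := hKconv.mem_nhds_zero_of_neg_eq hsymm hKint
  have hstrict : StrictConvex ℝ K := hKconv.strictConvex_of_collinear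
    fun x hx y hy z hz => eq_or_eq_or_eq_of_collinear hline hx hy hz
  intro v hv
  have hv0 : v ≠ 0 := by
    rintro rfl
    exact hv.2 (mem_interior_iff_mem_nhds.2 h0)
  obtain ⟨a, ha, hav⟩ := hKconv.exists_mem_frontier_add_mem_frontier h0
    (hKconv.isConnected_frontier (by simp [one_add_one_eq_two]) hKint hK.isBounded).isPreconnected
    hv (neg_mem_frontier_of_neg_eq hsymm hv)
  have hb : -(a + v) ∈ chordBases K v :=
    ⟨neg_mem_frontier_of_neg_eq hsymm hav, by simpa using neg_mem_frontier_of_neg_eq hsymm ha⟩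
  have hab : a ≠ -(a + v) := fun h => hKconv.smul_notMem_frontier h0
    (neg_mem_frontier_of_neg_eq hsymm ha) zero_le_two (by norm_num)
    (by convert hv using 1; linear_combination (norm := module) -h)
  refine ⟨{a, -(a + v)}, ⟨a, -(a + v), hab, ha, hb.1, by abel, rfl⟩, ?_⟩
  rintro _ ⟨p, p', -, hp, hp', hsum, rfl⟩
  obtain rfl : p' = -(p + v) := eq_neg_of_add_eq_zero_left (by rw [← hsum]; abel)
  have hpv : p + v ∈ frontier K := by simpa using neg_mem_frontier_of_neg_eq hsymm hp'
  rcases hstrict.eq_or_eq_or_eq_of_mem_chordBases hK.isClosed hv0 ⟨hp, hpv⟩ ⟨ha, hav⟩ hb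
    with rfl | rfl | h
  · rfl
  · rw [show -(-(a + v) + v) = a by abel, pair_comm]
  · exact absurd h hab
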